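/- Let H be a hypergraph with vertices v_1,…,v_n and hyperedges e_1,…,e_m, with no isolated vertices, and let σ ∈ 𝔦_m ⊗ 𝔦_n be its idem-Clifford transversal representation. If T = {v_i : i ∈ I} is a transversal of H with |I| = k, then the coefficient of the blade ε_{{1,…,m}} ⊗ x_I in the canonical expansion of σ^k is nonzero. -/
import Mathlib


open Finset

/-- Regular-representation action of the idem-Clifford blade `ε_J` (product of the
idempotent generators `ε_j`, `j ∈ J`, satisfying `ε_j ^ 2 = ε_j`) on the coefficient
space, acting in the first coordinate. -/
noncomputable def epsBladeL (α γ : Type*) [DecidableEq α] (J : Finset α) :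
    Module.End ℝ ((Finset α × γ) → ℝ) where
  toFun c := fun p => ∑ T ∈ p.1.powerset.filter (fun T => T ∪ J = p.1), c (T, p.2)
  map_add' x y := by
    funext p
    simp [Finset.sum_add_distrib]
  map_smul' r x := by
    funext p
    simp [Finset.mul_sum]

/-- Regular-representation action of the idem-Clifford blade `x_I` (product of the
idempotent generators `x_i`, `i ∈ I`, satisfying `x_i ^ 2 = x_i`) on the coefficient
space, acting in the second coordinate. -/
noncomputable def epsBladeR (γ β : Type*) [DecidableEq β] (I : Finset β) :
    Module.End ℝ ((γ × Finset β) → ℝ) where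
  toFun c := fun p => ∑ T ∈ p.2.powerset.filter (fun T => T ∪ I = p.2), c (p.1, T)
  map_add' x y := by
    funext p
    simp [Finset.sum_add_distrib]
  map_smul' r x := by
    funext p
    simp [Finset.mul_sum]

/-- The idem-Clifford transversal representation
`σ = Σ_i (∏_{j : v_i ∈ e_j} ε_j) ⊗ x_i ∈ 𝔦_m ⊗ 𝔦_n` of the hypergraph with
hyperedges `E : Fin m → Finset (Fin n)`. -/
noncomputable def sigmaRep {n m : ℕ} (E : Fin m → Finset (Fin n)) :
    Module.End ℝ ((Finset (Fin m) × Finset (Fin n)) → ℝ) :=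
  ∑ i : Fin n,
    epsBladeL (Fin m) (Finset (Fin n)) (Finset.univ.filter (fun j => i ∈ E j)) *
      epsBladeR (Finset (Fin m)) (Fin n) {i}

/-- The coefficient vector of `1 ∈ 𝔦_m ⊗ 𝔦_n`: the indicator of the empty blade.
Applying (the multiplication operator of) `u` to it and evaluating at `(J, I)` reads off
the coefficient `u_{(J,I)}` of the blade `ε_J ⊗ x_I` in the canonical expansion of `u`. -/
noncomputable def delta0 (n m : ℕ) : (Finset (Fin m) × Finset (Fin n)) → ℝ :=
  fun p => if p = ((∅ : Finset (Fin m)), (∅ : Finset (Fin n))) then 1 else 0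


lemma sigma_apply {n m : ℕ} (E : Fin m → Finset (Fin n))
    (c : (Finset (Fin m) × Finset (Fin n)) → ℝ) (p : Finset (Fin m) × Finset (Fin n)) :
    sigmaRep E c p = ∑ i : Fin n,
      ∑ T ∈ p.1.powerset.filter (fun T => T ∪ (Finset.univ.filter (fun j => i ∈ E j)) = p.1),
        ∑ S ∈ p.2.powerset.filter (fun S => S ∪ {i} = p.2), c (T, S) := by
  simp [sigmaRep, epsBladeL, epsBladeR, LinearMap.sum_apply, Finset.sum_apply,
    Module.End.mul_apply]

lemma sigma_pow_nonneg {n m : ℕ} (E : Fin m → Finset (Fin n)) (k : ℕ)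
    (p : Finset (Fin m) × Finset (Fin n)) : 0 ≤ ((sigmaRep E) ^ k) (delta0 n m) p := by
  induction k generalizing p with
  | zero => simp [delta0]; positivity
  | succ k ih =>
      rw [pow_succ', Module.End.mul_apply, sigma_apply]
      refine Finset.sum_nonneg fun i _ => Finset.sum_nonneg fun T _ =>
        Finset.sum_nonneg fun S _ => ih _

lemma sigma_pow_pos {n m : ℕ} (E : Fin m → Finset (Fin n)) (k : ℕ)
    (S : Finset (Fin n)) (hS : S.card = k) :
    0 < ((sigmaRep E) ^ k) (delta0 n m)
      (Finset.univ.filter (fun j => ∃ i ∈ S, i ∈ E j), S) := by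
  induction k generalizing S with
  | zero =>
      rw [Finset.card_eq_zero] at hS
      subst hS
      simp [delta0]
  | succ k ih =>
      obtain ⟨i0, hi0⟩ : S.Nonempty := Finset.card_pos.mp (by omega)
      set S' := S.erase i0 with hS'
      have hins : insert i0 S' = S := Finset.insert_erase hi0
      have hcard : S'.card = k := by
        rw [hS', Finset.card_erase_of_mem hi0, hS]; rfl
      rw [pow_succ', Module.End.mul_apply, sigma_apply]
      apply Finset.sum_pos'
      · intro i _
        exact Finset.sum_nonneg fun T _ => Finset.sum_nonneg fun W _ =>
          sigma_pow_nonneg E k _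
      refine ⟨i0, Finset.mem_univ _, ?_⟩
      apply Finset.sum_pos'
      · intro T _
        exact Finset.sum_nonneg fun W _ => sigma_pow_nonneg E k _
      refine ⟨Finset.univ.filter (fun j => ∃ i ∈ S', i ∈ E j), ?_, ?_⟩
      · simp only [Finset.mem_filter, Finset.mem_powerset]
        constructor
        · intro j hj
          simp only [Finset.mem_filter, Finset.mem_univ, true_and] at hj ⊢
          obtain ⟨i, hiS', hiE⟩ := hj
          exact ⟨i, Finset.mem_of_mem_erase hiS', hiE⟩
        · ext j
          simp only [Finset.mem_union, Finset.mem_filter, Finset.mem_univ, true_and]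
          constructor
          · rintro (⟨i, hi, hE⟩ | h)
            · exact ⟨i, Finset.mem_of_mem_erase hi, hE⟩
            · exact ⟨i0, hi0, h⟩
          · rintro ⟨i, hi, hE⟩
            rcases eq_or_ne i i0 with rfl | hne
            · exact Or.inr hE
            · exact Or.inl ⟨i, Finset.mem_erase.mpr ⟨hne, hi⟩, hE⟩
      apply Finset.sum_pos'
      · intro W _
        exact sigma_pow_nonneg E k _
      refine ⟨S', ?_, ih S' hcard⟩
      simp only [Finset.mem_filter, Finset.mem_powerset]
      exact ⟨Finset.erase_subset _ _, by rw [Finset.union_comm, ← Finset.insert_eq, hins]⟩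

/-- Let `H` be a hypergraph with `n` vertices and `m` nonempty
hyperedges and no isolated vertices, and `σ ∈ 𝔦_m ⊗ 𝔦_n` its idem-Clifford transversal
representation.  If `T = {v_i : i ∈ I}` is a transversal of `H` with `|I| = k`, then the
coefficient of the blade `ε_{{1,…,m}} ⊗ x_I` in the canonical expansion of `σ^k` is
nonzero. -/
theorem transversal_representation_sufficient {n m : ℕ} (E : Fin m → Finset (Fin n))
    (hE : ∀ j, (E j).Nonempty) (hiso : ∀ i : Fin n, ∃ j, i ∈ E j)
    (k : ℕ) (I : Finset (Fin n)) (hIk : I.card = k)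
    (hT : ∀ j : Fin m, ∃ i ∈ I, i ∈ E j) :
    ((sigmaRep E) ^ k) (delta0 n m) ((Finset.univ : Finset (Fin m)), I) ≠ 0 := by
  have h := sigma_pow_pos E k I hIk
  have heq : Finset.univ.filter (fun j => ∃ i ∈ I, i ∈ E j) = (Finset.univ : Finset (Fin m)) := by
    apply Finset.filter_true_of_mem
    intro j _
    exact hT j
  rw [heq] at h
  exact ne_of_gt h
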